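/- For every t ∈ ℝ and all x, v, w ∈ ℝⁿ, one has g₀(φ^t x)(φ^t v, φ^t w) = e^{−3t} · g₀(x)(v,w); that is, the flow φ^t is conformal for g₀ with constant conformal factor e^{−3t}. -/
import Mathlib


/-- The symmetric bilinear form `g₀(x)(v,w) = v₁w₂ + v₂w₁ + x₃²v₁w₁ + v₃w₄ + v₄w₃
    + Σ_{j=5}^{n} ε_j v_j w_j` (1-based indices; here indices are 0-based),
    where `ε_j = 1` for positions `5 ≤ j ≤ 4+s` and `ε_j = -1` otherwise. -/
def g0 (n : ℕ) (hn : 4 ≤ n) (s : ℕ) (x v w : Fin n → ℝ) : ℝ :=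
  v ⟨0, by omega⟩ * w ⟨1, by omega⟩ + v ⟨1, by omega⟩ * w ⟨0, by omega⟩
    + (x ⟨2, by omega⟩) ^ 2 * v ⟨0, by omega⟩ * w ⟨0, by omega⟩
    + v ⟨2, by omega⟩ * w ⟨3, by omega⟩ + v ⟨3, by omega⟩ * w ⟨2, by omega⟩
    + ∑ j : Fin n, if 4 ≤ (j : ℕ) then
        (if (j : ℕ) < 4 + s then (1 : ℝ) else -1) * v j * w j else 0

/-- The diagonal entries of the flow `φ^t`:
`(e^{-3t/2}, e^{-3t/2}, 1, e^{-3t}, e^{-3t/2}, …, e^{-3t/2})` (0-based position `j`). -/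
noncomputable def flowDiag (t : ℝ) (j : ℕ) : ℝ :=
  if j = 2 then 1
  else if j = 3 then Real.exp (-(3 * t))
  else Real.exp (-(3 * t) / 2)

/-- The flow `φ^t` is conformal for `g₀` with constant conformal factor `e^{-3t}`:
`g₀(φ^t x)(φ^t v, φ^t w) = e^{-3t} g₀(x)(v,w)`. -/
theorem flow_conformal (p q : ℕ) (hp : 2 ≤ p) (hpq : p ≤ q) (hq : 2 < q)
    (t : ℝ) (x v w : Fin (p + q) → ℝ) :
    g0 (p + q) (by omega) (q - 2)
        (fun j => flowDiag t (j : ℕ) * x j)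
        (fun j => flowDiag t (j : ℕ) * v j)
        (fun j => flowDiag t (j : ℕ) * w j)
      = Real.exp (-(3 * t)) * g0 (p + q) (by omega) (q - 2) x v w := by
  have hE : Real.exp (-(3 * t) / 2) * Real.exp (-(3 * t) / 2) = Real.exp (-(3 * t)) := by
    rw [← Real.exp_add]; ring_nf
  unfold g0
  beta_reduce
  rw [mul_add, mul_add, mul_add, mul_add, mul_add, Finset.mul_sum]
  congr 1
  · simp only [flowDiag]
    norm_num
    linear_combination (v ⟨0, by omega⟩ * w ⟨1, by omega⟩ + v ⟨1, by omega⟩ * w ⟨0, by omega⟩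
      + x ⟨2, by omega⟩ ^ 2 * v ⟨0, by omega⟩ * w ⟨0, by omega⟩) * hE
  · apply Finset.sum_congr rfl
    intro j _
    by_cases h4 : 4 ≤ (j : ℕ)
    · have h2 : (j : ℕ) ≠ 2 := by omega
      have h3 : (j : ℕ) ≠ 3 := by omega
      simp only [flowDiag, if_neg h2, if_neg h3, if_pos h4]
      by_cases h5 : (j : ℕ) < 4 + (q - 2) <;> simp [h5] <;> linear_combination (v j * w j) * hE
    · simp [h4]
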